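/- arXiv:2603.13550 — 4 statements merged into one kernel-verified Lean document; each statement's English description precedes it below -/
import Mathlib

section
/- Let E be a finite-dimensional vector space over a finite field with a rank function ρ satisfying the q-matroid axioms (ρ(0)=0, 0 ≤ ρ(X) ≤ dim X, monotonicity, and submodularity ρ(X+Y)+ρ(X∩Y) ≤ ρ(X)+ρ(Y)). Then any linear basis β of E contains a subset spanning a subspace B with ρ(B) = dim B = ρ(E), i.e. β contains a linear basis of a basis of the q-matroid. -/
/-!
Choose `γ ⊆ β` of maximal size among the subsets whose span `X` is independent (`ρ X = dim X`).
Adjoining any `b ∈ β` to `X` leaves the rank unchanged: either `b ∈ X`, or `X ⊔ ⟨b⟩` has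
dimension `dim X + 1` but is dependent by maximality, so its rank is at most `dim X = ρ X`.
Submodularity then propagates `ρ (X ⊔ Y) = ρ X` from the lines `Y = ⟨b⟩` to their sum, which is
`E`, so `ρ X = ρ E`.
-/

theorem map_sup_finset_sup_eq_of_submodular {α ι : Type*} [Lattice α] [OrderBot α] {f : α → ℕ}
    (hmono : Monotone f) (hsub : ∀ a b, f (a ⊔ b) + f (a ⊓ b) ≤ f a + f b)
    {x : α} {g : ι → α} (s : Finset ι) (h : ∀ i ∈ s, f (x ⊔ g i) = f x) :
    f (x ⊔ s.sup g) = f x := by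
  induction s using Finset.cons_induction with
  | empty => simp
  | cons i s hi ih =>
    rw [Finset.forall_mem_cons] at h
    have hs := ih h.2
    have hsup : x ⊔ (s.cons i hi).sup g = (x ⊔ g i) ⊔ (x ⊔ s.sup g) := by
      rw [Finset.sup_cons, sup_sup_distrib_left]
    have hinf : f x ≤ f ((x ⊔ g i) ⊓ (x ⊔ s.sup g)) := hmono (le_inf le_sup_left le_sup_left)
    have hle := hsub (x ⊔ g i) (x ⊔ s.sup g)
    have hge : f x ≤ f (x ⊔ (s.cons i hi).sup g) := hmono le_sup_left
    rw [hsup] at hge ⊢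
    omega

section QMatroid

variable {𝔽 E : Type*} [Field 𝔽] [AddCommGroup E] [Module 𝔽 E] {ρ : Submodule 𝔽 E → ℕ}

theorem span_finset_eq_sup_span_singleton (s : Finset E) :
    Submodule.span 𝔽 (s : Set E) = s.sup fun b => Submodule.span 𝔽 {b} := by
  rw [Submodule.span_eq_iSup_of_singleton_spans, Finset.sup_eq_iSup]
  rfl

theorem rank_sup_span_singleton_eq_of_not_mem [FiniteDimensional 𝔽 E]
    (hρdim : ∀ X : Submodule 𝔽 E, ρ X ≤ Module.finrank 𝔽 X)
    (hρmono : ∀ X Y : Submodule 𝔽 E, X ≤ Y → ρ X ≤ ρ Y)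
    {X : Submodule 𝔽 E} (hX : ρ X = Module.finrank 𝔽 X) {b : E} (hb : b ∉ X)
    (hdep : ρ (X ⊔ Submodule.span 𝔽 {b}) ≠ Module.finrank 𝔽 ↥(X ⊔ Submodule.span 𝔽 {b})) :
    ρ (X ⊔ Submodule.span 𝔽 {b}) = ρ X := by
  have hdim := Submodule.finrank_sup_span_singleton hb
  have hle := hρdim (X ⊔ Submodule.span 𝔽 {b})
  have hge := hρmono X (X ⊔ Submodule.span 𝔽 {b}) le_sup_left
  omega

theorem exists_subset_rank_eq_finrank_and_rank_sup_span_singleton_eq [FiniteDimensional 𝔽 E]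
    (hρ0 : ρ ⊥ = 0)
    (hρdim : ∀ X : Submodule 𝔽 E, ρ X ≤ Module.finrank 𝔽 X)
    (hρmono : ∀ X Y : Submodule 𝔽 E, X ≤ Y → ρ X ≤ ρ Y) (β : Finset E) :
    ∃ γ ⊆ β, ρ (Submodule.span 𝔽 (γ : Set E)) = Module.finrank 𝔽 (Submodule.span 𝔽 (γ : Set E))
      ∧ ∀ b ∈ β, ρ (Submodule.span 𝔽 (γ : Set E) ⊔ Submodule.span 𝔽 {b}) =
        ρ (Submodule.span 𝔽 (γ : Set E)) := by
  classical
  let IsIndep : Finset E → Prop := fun γ =>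
    ρ (Submodule.span 𝔽 (γ : Set E)) = Module.finrank 𝔽 (Submodule.span 𝔽 (γ : Set E))
  have hempty : ∅ ∈ β.powerset.filter IsIndep := by
    simp only [Finset.mem_filter, Finset.mem_powerset, Finset.empty_subset, true_and, IsIndep]
    rw [Finset.coe_empty, Submodule.span_empty, hρ0, finrank_bot]
  obtain ⟨γ, hγ, hγmax⟩ := Finset.exists_max_image _ Finset.card ⟨_, hempty⟩
  rw [Finset.mem_filter, Finset.mem_powerset] at hγ
  refine ⟨γ, hγ.1, hγ.2, fun b hbβ => ?_⟩
  by_cases hb : b ∈ Submodule.span 𝔽 (γ : Set E)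
  · rw [sup_eq_left.2 ((Submodule.span_singleton_le_iff_mem _ _).2 hb)]
  · refine rank_sup_span_singleton_eq_of_not_mem hρdim hρmono hγ.2 hb fun hindep => ?_
    have hbγ : b ∉ γ := fun h => hb (Submodule.subset_span h)
    have hins : insert b γ ∈ β.powerset.filter IsIndep := by
      rw [Finset.mem_filter, Finset.mem_powerset]
      refine ⟨Finset.insert_subset hbβ hγ.1, ?_⟩
      show IsIndep (insert b γ)
      rwa [← sup_comm, ← Submodule.span_insert, ← Finset.coe_insert] at hindep
    have hcard := hγmax _ hins
    rw [Finset.card_insert_of_notMem hbγ] at hcard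
    omega

end QMatroid

theorem stmt0_general {𝔽 E : Type*} [Field 𝔽] [AddCommGroup E] [Module 𝔽 E]
    [FiniteDimensional 𝔽 E]
    (ρ : Submodule 𝔽 E → ℕ)
    (hρ0 : ρ ⊥ = 0)
    (hρdim : ∀ X : Submodule 𝔽 E, ρ X ≤ Module.finrank 𝔽 X)
    (hρmono : ∀ X Y : Submodule 𝔽 E, X ≤ Y → ρ X ≤ ρ Y)
    (hρsub : ∀ X Y : Submodule 𝔽 E, ρ (X ⊔ Y) + ρ (X ⊓ Y) ≤ ρ X + ρ Y)
    (β : Finset E)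
    (hspan : Submodule.span 𝔽 (β : Set E) = ⊤) :
    ∃ γ ⊆ β, ρ (Submodule.span 𝔽 (γ : Set E)) = Module.finrank 𝔽 (Submodule.span 𝔽 (γ : Set E))
      ∧ ρ (Submodule.span 𝔽 (γ : Set E)) = ρ ⊤ := by
  obtain ⟨γ, hγβ, hindep, hstep⟩ :=
    exists_subset_rank_eq_finrank_and_rank_sup_span_singleton_eq hρ0 hρdim hρmono β
  refine ⟨γ, hγβ, hindep, ?_⟩
  have htop := map_sup_finset_sup_eq_of_submodular (fun X Y => hρmono X Y) hρsub β hstep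
  rw [← span_finset_eq_sup_span_singleton, hspan, sup_top_eq] at htop
  exact htop.symm

/-- In a q-matroid (E, ρ), any linear basis of E contains a linear basis
of a basis of the q-matroid, i.e. a subset spanning a subspace B with
ρ(B) = dim B = ρ(E). -/
theorem stmt0 {𝔽 E : Type*} [Field 𝔽] [Fintype 𝔽] [AddCommGroup E] [Module 𝔽 E]
    [FiniteDimensional 𝔽 E]
    (ρ : Submodule 𝔽 E → ℕ)
    (hρ0 : ρ ⊥ = 0)
    (hρdim : ∀ X : Submodule 𝔽 E, ρ X ≤ Module.finrank 𝔽 X)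
    (hρmono : ∀ X Y : Submodule 𝔽 E, X ≤ Y → ρ X ≤ ρ Y)
    (hρsub : ∀ X Y : Submodule 𝔽 E, ρ (X ⊔ Y) + ρ (X ⊓ Y) ≤ ρ X + ρ Y)
    (β : Finset E)
    (hind : LinearIndependent 𝔽 (fun b : {x // x ∈ β} => (b : E)))
    (hspan : Submodule.span 𝔽 (β : Set E) = ⊤) :
    ∃ γ ⊆ β, ρ (Submodule.span 𝔽 (γ : Set E)) = Module.finrank 𝔽 (Submodule.span 𝔽 (γ : Set E))
      ∧ ρ (Submodule.span 𝔽 (γ : Set E)) = ρ ⊤ :=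
  stmt0_general ρ hρ0 hρdim hρmono hρsub β hspan
end

section
/- Let M = ([n], r) be an avoidance transversal matroid with presentation S = (S_1,…,S_k), and let φ(M) be the q-matroid on F_q^n whose independent spaces are the subspaces X ≤ F_q^n all of whose linear bases admit an avoidance transversal of X = (φ(S_1),…,φ(S_k)). If I ⊆ [n] is independent in M, then the coordinate subspace φ(I) = span{e_i : i ∈ I} is independent in φ(M). -/
open Submodule

/-- `X` has an avoidance transversal of the family `A`: an injection `f` from `X`
into the index type with `x ∉ A (f x)` for all `x ∈ X`. -/
def AvoidsT {α ι : Type*} (A : ι → Set α) (X : Finset α) : Prop :=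
  ∃ f : {x // x ∈ X} → ι, Function.Injective f ∧ ∀ x : {x // x ∈ X}, (x : α) ∉ A (f x)

/-- The rank function of the avoidance transversal matroid with presentation `A`:
the maximum size of a subset of `X` admitting an avoidance transversal. -/
noncomputable def atRank {α ι : Type*} (A : ι → Set α) (X : Finset α) : ℕ :=
  sSup {m | ∃ Y : Finset α, Y ⊆ X ∧ AvoidsT A Y ∧ Y.card = m}

/-- `W` is a partial q-transversal of the family of subspaces `X`: every linear
basis of `W` admits an avoidance transversal of `X`. These are the independent
spaces of the transversal q-matroid with presentation `X`. -/
def IsPartialQT {𝔽 V ι : Type*} [Field 𝔽] [AddCommGroup V] [Module 𝔽 V]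
    (X : ι → Submodule 𝔽 V) (W : Submodule 𝔽 V) : Prop :=
  ∀ β : Finset V, (β : Set V) ⊆ (W : Set V) →
    LinearIndependent 𝔽 (fun b : {x // x ∈ β} => (b : V)) →
    span 𝔽 (β : Set V) = W →
    AvoidsT (fun i => ((X i : Submodule 𝔽 V) : Set V)) β

/-- The rank function of the transversal q-matroid with presentation `X`. -/
noncomputable def qtRank {𝔽 V ι : Type*} [Field 𝔽] [AddCommGroup V] [Module 𝔽 V]
    (X : ι → Submodule 𝔽 V) (W : Submodule 𝔽 V) : ℕ :=
  sSup {d | ∃ U : Submodule 𝔽 V, U ≤ W ∧ IsPartialQT X U ∧ Module.finrank 𝔽 U = d}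

/-- The coordinate subspace `φ(S) = span {e_i : i ∈ S}` of `𝔽^n`. -/
def coordSub (𝔽 : Type*) [Field 𝔽] {n : ℕ} (S : Set (Fin n)) : Submodule 𝔽 (Fin n → 𝔽) :=
  span 𝔽 ((fun i => Pi.single i (1 : 𝔽)) '' S)

/-- The support of a vector: the set of indices of its nonzero coordinates. -/
def suppS {𝔽 : Type*} [Field 𝔽] {n : ℕ} (v : Fin n → 𝔽) : Set (Fin n) := {j | v j ≠ 0}

/-!
Every vector of a basis `β` of `φ(I)` is supported in `I`. Any `m` vectors of `β` are
independent and lie in the coordinate space of the union of their supports, so that union has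
at least `m` elements: this is Hall's condition, and it yields distinct coordinates
`g b ∈ supp b ⊆ I`. Following with the transversal `f` of `I`, the vector `b` avoids
`φ(S_{f(g b)})` because its `g b`-coordinate is nonzero while `g b ∉ S_{f(g b)}`.
-/

theorem LinearIndependent.card_le_card_filter_exists_apply_ne_zero {K η ι : Type*}
    [DivisionRing K] [DecidableEq K] [Fintype η] {v : ι → η → K} (hv : LinearIndependent K v)
    (A : Finset ι) : A.card ≤ (Finset.univ.filter fun j => ∃ i ∈ A, v i j ≠ 0).card := by
  set U : Finset η := Finset.univ.filter fun j => ∃ i ∈ A, v i j ≠ 0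
  have hspan : span K (Set.range (v ∘ (↑) : A → η → K)) ≤ Pi.spanSubset K (U : Set η) := by
    refine span_le.2 ?_
    rintro _ ⟨i, rfl⟩
    refine Pi.mem_spanSubset_iff.2 fun j hj => ?_
    by_contra hne
    exact hj (by simpa [U] using ⟨i, i.2, hne⟩)
  calc A.card = Module.finrank K (span K (Set.range (v ∘ (↑) : A → η → K))) := by
        rw [finrank_span_eq_card (hv.comp _ Subtype.val_injective), Fintype.card_coe]
    _ ≤ Module.finrank K (Pi.spanSubset K (U : Set η)) := finrank_mono hspan
    _ = U.card := by rw [Pi.dim_spanSubset, Set.ncard_coe_finset]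

theorem LinearIndependent.exists_injective_apply_ne_zero {K η ι : Type*} [DivisionRing K]
    [Finite η] {v : ι → η → K} (hv : LinearIndependent K v) :
    ∃ g : ι → η, Function.Injective g ∧ ∀ i, v i (g i) ≠ 0 := by
  classical
  have := Fintype.ofFinite η
  exact (Fintype.all_card_le_filter_rel_iff_exists_injective fun i j => v i j ≠ 0).1
    hv.card_le_card_filter_exists_apply_ne_zero

theorem coordSub_eq_spanSubset {𝔽 : Type*} [Field 𝔽] {n : ℕ} (T : Set (Fin n)) :
    coordSub 𝔽 T = Pi.spanSubset 𝔽 T := by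
  simp [coordSub, Pi.spanSubset]

theorem mem_of_mem_coordSub_of_apply_ne_zero {𝔽 : Type*} [Field 𝔽] {n : ℕ} {T : Set (Fin n)}
    {v : Fin n → 𝔽} {j : Fin n} (hv : v ∈ coordSub 𝔽 T) (hj : v j ≠ 0) : j ∈ T := by
  rw [coordSub_eq_spanSubset, Pi.mem_spanSubset_iff] at hv
  exact not_not.1 fun hjT => hj (hv j hjT)

theorem stmt5_general {𝔽 : Type*} [Field 𝔽] {n k : ℕ}
    (S : Fin k → Set (Fin n)) (I : Finset (Fin n))
    (hI : AvoidsT S I) :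
    IsPartialQT (fun i => coordSub 𝔽 (S i)) (coordSub 𝔽 (I : Set (Fin n))) := by
  obtain ⟨f, hf, hfS⟩ := hI
  intro β hβI hβ _
  obtain ⟨g, hg, hgβ⟩ := hβ.exists_injective_apply_ne_zero
  have hgI : ∀ b, g b ∈ I := fun b => mem_of_mem_coordSub_of_apply_ne_zero (hβI b.2) (hgβ b)
  refine ⟨fun b => f ⟨g b, hgI b⟩, fun a b hab => hg (congrArg Subtype.val (hf hab)), ?_⟩
  intro b hb
  exact hfS _ (mem_of_mem_coordSub_of_apply_ne_zero hb (hgβ b))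

/-- if `I` is independent in the avoidance transversal matroid with
presentation `(S_1,…,S_k)`, then the coordinate subspace `φ(I)` is independent in
the transversal q-matroid with presentation `(φ(S_1),…,φ(S_k))`. -/
theorem stmt5 {𝔽 : Type*} [Field 𝔽] [Fintype 𝔽] {n k : ℕ}
    (S : Fin k → Set (Fin n)) (I : Finset (Fin n))
    (hI : AvoidsT S I) :
    IsPartialQT (fun i => coordSub 𝔽 (S i)) (coordSub 𝔽 (I : Set (Fin n))) :=
  stmt5_general S I hI
end

section
/- Let M = ([n], r) be an avoidance transversal matroid with presentation (S_1,…,S_k) and let φ(M) be the transversal q-matroid on F_q^n with presentation (φ(S_1),…,φ(S_k)). If F ⊆ [n] is a flat of M, then φ(F) = span{e_i : i ∈ F} is a flat of φ(M), i.e. for every v ∈ F_q^n ∖ φ(F), ρ(φ(F) + span(v)) > ρ(φ(F)), where ρ is the rank function of φ(M). -/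
open Submodule

/-!
The rank of `φ(F)` in the q-matroid is at most the rank `r` of `F` in `M`. By the deficiency
form of Hall's theorem it suffices that, for a q-independent `U ≤ φ(F)` and `Z ⊆ F`,
`dim (U ⊓ φ(Z))` is at most the number of sets `S i` avoided by some element of `Z`; this follows
by applying the avoidance transversal of a basis of `U` extending a basis of `U ⊓ φ(Z)`.

Conversely, pick `j ∉ F` with `v j ≠ 0`. Since `F` is a flat, some `insert j Y` with `Y ⊆ F` has
an avoidance transversal and `r + 1` elements, and `φ(Y) ⊔ span {v}` is q-independent of
dimension `r + 1`: Hall's condition holds for any set `T` of basis vectors because `dim (span T)`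
is at most the number of coordinates of `insert j Y` in the support of `T`, and those are matched
into the sets avoided by elements of `T`.
-/

open Finset

section Transversal

variable {α ι : Type*}

theorem AvoidsT.mono {A : ι → Set α} {X Y : Finset α} (hXY : X ⊆ Y) (hY : AvoidsT A Y) :
    AvoidsT A X := by
  obtain ⟨f, hf, hfA⟩ := hY
  exact ⟨fun x => f ⟨x, hXY x.2⟩, fun x y h => Subtype.ext (Subtype.mk.inj (hf h)),
    fun x => hfA _⟩

theorem AvoidsT.card_le {A : ι → Set α} {X : Finset α} (hX : AvoidsT A X) (N : Finset ι)
    (hN : ∀ x ∈ X, ∀ i, x ∉ A i → i ∈ N) : #X ≤ #N := by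
  obtain ⟨f, hf, hfA⟩ := hX
  simpa using Fintype.card_le_of_injective (fun x => (⟨f x, hN x x.2 _ (hfA x)⟩ : N))
    fun x y h => hf (congrArg Subtype.val h)

theorem avoidsT_empty (A : ι → Set α) : AvoidsT A ∅ :=
  ⟨isEmptyElim, fun x => isEmptyElim x, isEmptyElim⟩

theorem Finset.card_le_card_biUnion_disjSum_of_card_le_card_biUnion_add [DecidableEq ι]
    {t : α → Finset ι} {F : Finset α} {m : ℕ} (h : ∀ Z ⊆ F, #Z ≤ #(Z.biUnion t) + m)
    (s : Finset F) : #s ≤ #(s.biUnion fun x => (t x).disjSum (univ : Finset (Fin m))) := by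
  rcases s.eq_empty_or_nonempty with rfl | ⟨x₀, hx₀⟩
  · simp
  have hsub : ((s.map (.subtype _)).biUnion t).disjSum (univ : Finset (Fin m))
      ⊆ s.biUnion fun x => (t x).disjSum univ := by
    rintro (i | b) hy
    · obtain ⟨x, hx, hi⟩ := mem_biUnion.1 (inl_mem_disjSum.1 hy)
      obtain ⟨x, hxs, rfl⟩ := mem_map.1 hx
      exact mem_biUnion.2 ⟨x, hxs, inl_mem_disjSum.2 hi⟩
    · exact mem_biUnion.2 ⟨x₀, hx₀, inr_mem_disjSum.2 (mem_univ b)⟩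
  calc #s = #(s.map (.subtype _)) := (card_map _).symm
    _ ≤ #((s.map (.subtype _)).biUnion t) + m := h _ fun x hx => by
        obtain ⟨x, -, rfl⟩ := mem_map.1 hx; exact x.2
    _ = #(((s.map (.subtype _)).biUnion t).disjSum univ) := by simp [card_disjSum]
    _ ≤ _ := card_le_card hsub

/-- The deficiency form of Hall's theorem, reduced to Hall's theorem by adjoining `m` new elements
to every `t x`. -/
theorem Finset.exists_subset_injective_of_card_le_card_biUnion_add [DecidableEq ι]
    (t : α → Finset ι) (F : Finset α) (m : ℕ) (h : ∀ Z ⊆ F, #Z ≤ #(Z.biUnion t) + m) :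
    ∃ Y ⊆ F, #F ≤ #Y + m ∧ ∃ f : Y → ι, Function.Injective f ∧ ∀ y : Y, f y ∈ t y := by
  obtain ⟨f, hf, hft⟩ := (all_card_le_biUnion_card_iff_exists_injective _).1
    (card_le_card_biUnion_disjSum_of_card_le_card_biUnion_add h)
  have hR : #(F.attach.filter fun x => ¬(f x).isLeft) ≤ m := by
    refine (card_le_card_of_injOn f (t := univ.map .inr) (fun x hx => ?_) hf.injOn).trans
      (by simp)
    obtain ⟨b, hb⟩ := Sum.isRight_iff.1 (Sum.not_isLeft.1 (mem_filter.1 hx).2)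
    simp [hb]
  have hsplit := card_filter_add_card_filter_not (s := F.attach) fun x => (f x).isLeft
  set L := F.attach.filter fun x => (f x).isLeft
  have hL : ∀ y ∈ L.map (.subtype _), ∃ h : y ∈ F, (f ⟨y, h⟩).isLeft := by
    intro y hy
    obtain ⟨x, hx, rfl⟩ := mem_map.1 hy
    exact ⟨x.2, (mem_filter.1 hx).2⟩
  let g : L.map (.subtype _) → ι := fun y => (f ⟨y, (hL y y.2).1⟩).getLeft (hL y y.2).2
  have hfg : ∀ y : L.map (.subtype _), f ⟨y, (hL y y.2).1⟩ = .inl (g y) :=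
    fun y => (Sum.inl_getLeft _ _).symm
  refine ⟨L.map (.subtype _), fun y hy => (hL y hy).1, ?_, g, fun y z h => ?_, fun y => ?_⟩
  · rw [card_map]
    rw [card_attach] at hsplit
    omega
  · have := hf ((hfg y).trans ((congrArg Sum.inl h).trans (hfg z).symm))
    exact Subtype.ext (Subtype.mk.inj this)
  · simpa [hfg y] using hft ⟨y, (hL y y.2).1⟩

open Classical in
noncomputable def avoiders [Fintype ι] (A : ι → Set α) (x : α) : Finset ι := {i | x ∉ A i}

@[simp]
theorem mem_avoiders [Fintype ι] {A : ι → Set α} {x : α} {i : ι} :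
    i ∈ avoiders A x ↔ x ∉ A i := by
  simp [avoiders]

theorem exists_subset_avoidsT_of_card_le_card_biUnion_add [Fintype ι] [DecidableEq ι]
    (A : ι → Set α) (F : Finset α) (m : ℕ)
    (h : ∀ Z ⊆ F, #Z ≤ #(Z.biUnion (avoiders A)) + m) :
    ∃ Y ⊆ F, #F ≤ #Y + m ∧ AvoidsT A Y := by
  obtain ⟨Y, hYF, hcard, f, hf, hfA⟩ :=
    exists_subset_injective_of_card_le_card_biUnion_add (avoiders A) F m h
  exact ⟨Y, hYF, hcard, f, hf, fun y => mem_avoiders.1 (hfA y)⟩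

theorem avoidsT_of_card_le_card_biUnion [Fintype ι] [DecidableEq ι] {A : ι → Set α}
    {F : Finset α} (h : ∀ Z ⊆ F, #Z ≤ #(Z.biUnion (avoiders A))) : AvoidsT A F := by
  obtain ⟨Y, hYF, hcard, hY⟩ := exists_subset_avoidsT_of_card_le_card_biUnion_add A F 0 h
  rwa [eq_of_subset_of_card_le hYF hcard] at hY

theorem bddAbove_card_avoidsT (A : ι → Set α) (X : Finset α) :
    BddAbove {m | ∃ Y ⊆ X, AvoidsT A Y ∧ #Y = m} :=
  ⟨#X, by rintro _ ⟨Y, hYX, -, rfl⟩; exact card_le_card hYX⟩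

theorem le_atRank {A : ι → Set α} {X Y : Finset α} (hYX : Y ⊆ X) (hY : AvoidsT A Y) :
    #Y ≤ atRank A X :=
  le_csSup (bddAbove_card_avoidsT A X) ⟨Y, hYX, hY, rfl⟩

theorem exists_avoidsT_card_eq_atRank (A : ι → Set α) (X : Finset α) :
    ∃ Y ⊆ X, AvoidsT A Y ∧ #Y = atRank A X :=
  Nat.sSup_mem (by exact ⟨0, ∅, empty_subset X, avoidsT_empty A, rfl⟩) (bddAbove_card_avoidsT A X)

end Transversal

theorem Submodule.finrank_add_finrank_le_of_sup_le {K V : Type*} [DivisionRing K]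
    [AddCommGroup V] [Module K V] [FiniteDimensional K V] {U A B : Submodule K V}
    (h : U ⊔ A ≤ B) :
    Module.finrank K U + Module.finrank K A ≤ Module.finrank K B + Module.finrank K ↥(U ⊓ A) := by
  rw [← finrank_sup_add_finrank_inf_eq]
  exact Nat.add_le_add_right (finrank_mono h) _

section QTransversal

variable {𝔽 V ι : Type*} [Field 𝔽] [AddCommGroup V] [Module 𝔽 V] [FiniteDimensional 𝔽 V]
  {X : ι → Submodule 𝔽 V}

theorem le_qtRank {U W : Submodule 𝔽 V} (hUW : U ≤ W) (hU : IsPartialQT X U) :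
    Module.finrank 𝔽 U ≤ qtRank X W := by
  unfold qtRank
  exact le_csSup ⟨Module.finrank 𝔽 V, by rintro _ ⟨U', -, -, rfl⟩; exact U'.finrank_le⟩
    ⟨U, hUW, hU, rfl⟩

theorem IsPartialQT.avoidsT {U : Submodule 𝔽 V} (hU : IsPartialQT X U) {β : Finset V}
    (hβU : (β : Set V) ⊆ U) (hβ : LinearIndepOn 𝔽 id (β : Set V)) :
    AvoidsT (fun i => (X i : Set V)) β := by
  obtain ⟨γ, hγU, hβγ, hUγ, hγ⟩ := exists_linearIndepOn_id_extension hβ hβU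
  lift γ to Finset V using hγ.finite
  exact (hU γ hγU hγ (le_antisymm (span_le.2 hγU) hUγ)).mono (by exact_mod_cast hβγ)

end QTransversal

section Coordinate

variable {𝔽 : Type*} [Field 𝔽] {n k : ℕ}

theorem coordSub_eq_span_basisFun_image (T : Set (Fin n)) :
    coordSub 𝔽 T = span 𝔽 (Pi.basisFun 𝔽 (Fin n) '' T) := by
  simp [coordSub]

theorem mem_coordSub_iff {T : Set (Fin n)} {v : Fin n → 𝔽} :
    v ∈ coordSub 𝔽 T ↔ ∀ i ∉ T, v i = 0 := by
  rw [coordSub_eq_span_basisFun_image, Module.Basis.mem_span_image]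
  simp [Set.subset_def, not_imp_comm]

theorem coordSub_mono {A B : Set (Fin n)} (h : A ⊆ B) : coordSub 𝔽 A ≤ coordSub 𝔽 B :=
  span_mono (Set.image_mono h)

theorem coordSub_inf (A B : Set (Fin n)) :
    coordSub 𝔽 A ⊓ coordSub 𝔽 B = coordSub 𝔽 (A ∩ B) := by
  ext v
  simp only [Submodule.mem_inf, mem_coordSub_iff, Set.mem_inter_iff, not_and_or]
  exact ⟨fun h i hi => hi.elim (h.1 i) (h.2 i), fun h => ⟨fun i hi => h i (.inl hi),
    fun i hi => h i (.inr hi)⟩⟩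

theorem finrank_coordSub (Y : Finset (Fin n)) :
    Module.finrank 𝔽 (coordSub 𝔽 (Y : Set (Fin n))) = #Y := by
  have hli := (Pi.basisFun 𝔽 (Fin n)).linearIndependent.comp ((↑) : Y → Fin n) Subtype.val_injective
  rw [coordSub_eq_span_basisFun_image, Set.image_eq_range]
  exact (finrank_span_eq_card hli).trans (by simp)

theorem notMem_coordSub_of_apply_ne_zero {T : Set (Fin n)} {v : Fin n → 𝔽} {i : Fin n}
    (hvi : v i ≠ 0) (hiT : i ∉ T) : v ∉ coordSub 𝔽 T :=
  fun hv => hvi (mem_coordSub_iff.1 hv i hiT)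

open Classical in
noncomputable def jointSupport (T : Set (Fin n → 𝔽)) : Finset (Fin n) := {i | ∃ b ∈ T, b i ≠ 0}

@[simp]
theorem mem_jointSupport {T : Set (Fin n → 𝔽)} {i : Fin n} :
    i ∈ jointSupport T ↔ ∃ b ∈ T, b i ≠ 0 := by
  simp [jointSupport]

theorem span_le_coordSub_jointSupport (T : Set (Fin n → 𝔽)) :
    span 𝔽 T ≤ coordSub 𝔽 (jointSupport T : Set (Fin n)) :=
  span_le.2 fun b hb => mem_coordSub_iff.2 fun _ hi =>
    by_contra fun h => hi (mem_jointSupport.2 ⟨b, hb, h⟩)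

theorem IsPartialQT.finrank_inf_coordSub_le {S : Fin k → Set (Fin n)}
    {U : Submodule 𝔽 (Fin n → 𝔽)} (hU : IsPartialQT (fun i => coordSub 𝔽 (S i)) U)
    (Z : Finset (Fin n)) :
    Module.finrank 𝔽 ↥(U ⊓ coordSub 𝔽 (Z : Set (Fin n))) ≤ #(Z.biUnion (avoiders S)) := by
  obtain ⟨β, hβD, hspan, hβ⟩ :=
    exists_linearIndependent 𝔽
      ((U ⊓ coordSub 𝔽 (Z : Set (Fin n)) : Submodule 𝔽 (Fin n → 𝔽)) : Set (Fin n → 𝔽))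
  lift β to Finset (Fin n → 𝔽) using hβ.finite
  rw [span_eq] at hspan
  rw [← hspan, finrank_span_finset_eq_card hβ]
  refine (hU.avoidsT (hβD.trans fun x hx => hx.1) hβ).card_le _ fun b hb i hi => ?_
  obtain ⟨l, hl, hbl⟩ : ∃ l ∉ S i, b l ≠ 0 := by simpa [mem_coordSub_iff] using hi
  have hlZ : l ∈ Z := by_contra fun h => hbl (mem_coordSub_iff.1 (hβD hb).2 l h)
  exact mem_biUnion.2 ⟨l, hlZ, mem_avoiders.2 hl⟩

theorem qtRank_coordSub_le_atRank (S : Fin k → Set (Fin n)) (F : Finset (Fin n)) :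
    qtRank (fun i => coordSub 𝔽 (S i)) (coordSub 𝔽 (F : Set (Fin n))) ≤ atRank S F := by
  unfold qtRank
  refine csSup_le' ?_
  rintro _ ⟨U, hUF, hU, rfl⟩
  have hUF' : Module.finrank 𝔽 U ≤ #F := finrank_coordSub (𝔽 := 𝔽) F ▸ finrank_mono hUF
  obtain ⟨Y, hYF, hcard, hY⟩ := exists_subset_avoidsT_of_card_le_card_biUnion_add S F
    (#F - Module.finrank 𝔽 U) fun Z hZF => by
      have := finrank_add_finrank_le_of_sup_le (sup_le hUF (coordSub_mono (coe_subset.2 hZF)))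
      rw [finrank_coordSub, finrank_coordSub] at this
      have := hU.finrank_inf_coordSub_le Z
      omega
  exact (by omega : Module.finrank 𝔽 U ≤ #Y).trans (le_atRank hYF hY)

variable {Y : Finset (Fin n)} {j : Fin n} {v : Fin n → 𝔽}

theorem finrank_coordSub_sup_span_singleton (hjY : j ∉ Y) (hvj : v j ≠ 0) :
    Module.finrank 𝔽 ↥(coordSub 𝔽 (Y : Set (Fin n)) ⊔ span 𝔽 {v}) = #Y + 1 := by
  rw [finrank_sup_span_singleton (notMem_coordSub_of_apply_ne_zero hvj (by simpa)),
    finrank_coordSub]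

theorem mem_coordSub_of_mem_sup_span_singleton (hjY : j ∉ Y) (hvj : v j ≠ 0) {w : Fin n → 𝔽}
    (hw : w ∈ coordSub 𝔽 (Y : Set (Fin n)) ⊔ span 𝔽 {v}) (hwj : w j = 0) :
    w ∈ coordSub 𝔽 (Y : Set (Fin n)) := by
  obtain ⟨u, hu, _, hc, rfl⟩ := mem_sup.1 hw
  obtain ⟨c, rfl⟩ := mem_span_singleton.1 hc
  have huj : u j = 0 := mem_coordSub_iff.1 hu j (by simpa)
  have hc0 : c = 0 := by simpa [huj, hvj] using hwj
  simpa [hc0] using hu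

variable [DecidableEq (Fin n)]

theorem finrank_span_le_card_jointSupport_inter (hjY : j ∉ Y) (hvj : v j ≠ 0)
    {T : Set (Fin n → 𝔽)} (hT : span 𝔽 T ≤ coordSub 𝔽 (Y : Set (Fin n)) ⊔ span 𝔽 {v}) :
    Module.finrank 𝔽 (span 𝔽 T) ≤ #(jointSupport T ∩ insert j Y) := by
  have hinf : Module.finrank 𝔽 ↥(span 𝔽 T ⊓ coordSub 𝔽 (Y : Set (Fin n)))
      ≤ #(jointSupport T ∩ Y) := by
    rw [← finrank_coordSub (𝔽 := 𝔽), coe_inter, ← coordSub_inf]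
    exact finrank_mono (inf_le_inf_right _ (span_le_coordSub_jointSupport T))
  by_cases hj : j ∈ jointSupport T
  · have := finrank_add_finrank_le_of_sup_le (sup_le hT le_sup_left :
      span 𝔽 T ⊔ coordSub 𝔽 (Y : Set (Fin n)) ≤ coordSub 𝔽 (Y : Set (Fin n)) ⊔ span 𝔽 {v})
    rw [finrank_coordSub_sup_span_singleton hjY hvj, finrank_coordSub] at this
    rw [inter_insert_of_mem hj, card_insert_of_notMem fun h => hjY (mem_inter.1 h).2]
    omega
  · have hTY : span 𝔽 T ≤ coordSub 𝔽 (Y : Set (Fin n)) := span_le.2 fun b hb =>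
      mem_coordSub_of_mem_sup_span_singleton hjY hvj (hT (subset_span hb))
        (by_contra fun h => hj (mem_jointSupport.2 ⟨b, hb, h⟩))
    calc Module.finrank 𝔽 (span 𝔽 T)
        = Module.finrank 𝔽 ↥(span 𝔽 T ⊓ coordSub 𝔽 (Y : Set (Fin n))) := by
          rw [inf_eq_left.2 hTY]
      _ ≤ #(jointSupport T ∩ insert j Y) :=
          hinf.trans (card_le_card (inter_subset_inter_left (subset_insert _ _)))

theorem isPartialQT_coordSub_sup_span_singleton (S : Fin k → Set (Fin n)) (hjY : j ∉ Y)
    (hvj : v j ≠ 0) (hY : AvoidsT S (insert j Y)) :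
    IsPartialQT (fun i => coordSub 𝔽 (S i)) (coordSub 𝔽 (Y : Set (Fin n)) ⊔ span 𝔽 {v}) := by
  intro β hβW hβ _
  refine avoidsT_of_card_le_card_biUnion fun T hTβ => ?_
  calc #T = Module.finrank 𝔽 (span 𝔽 (T : Set (Fin n → 𝔽))) :=
        (finrank_span_finset_eq_card (LinearIndepOn.mono hβ (coe_subset.2 hTβ))).symm
    _ ≤ #(jointSupport (T : Set (Fin n → 𝔽)) ∩ insert j Y) :=
        finrank_span_le_card_jointSupport_inter hjY hvj (span_le.2 ((coe_subset.2 hTβ).trans hβW))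
    _ ≤ #(T.biUnion (avoiders _)) := (hY.mono inter_subset_right).card_le _ fun l hl i hli => by
        obtain ⟨b, hbT, hbl⟩ := mem_jointSupport.1 (mem_inter.1 hl).1
        exact mem_biUnion.2 ⟨b, hbT, mem_avoiders.2 (notMem_coordSub_of_apply_ne_zero hbl hli)⟩

end Coordinate

theorem stmt7_general {𝔽 : Type*} [Field 𝔽] {n k : ℕ} [DecidableEq (Fin n)]
    (S : Fin k → Set (Fin n)) (F : Finset (Fin n))
    (hflat : ∀ j ∉ F, atRank S F < atRank S (insert j F)) :
    ∀ v : Fin n → 𝔽, v ∉ coordSub 𝔽 (F : Set (Fin n)) →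
      qtRank (fun i => coordSub 𝔽 (S i)) (coordSub 𝔽 (F : Set (Fin n)))
        < qtRank (fun i => coordSub 𝔽 (S i))
            (coordSub 𝔽 (F : Set (Fin n)) ⊔ span 𝔽 {v}) := by
  intro v hv
  obtain ⟨j, hjF, hvj⟩ : ∃ j ∉ F, v j ≠ 0 := by simpa [mem_coordSub_iff] using hv
  obtain ⟨Y, hYF, hY, hcard⟩ := exists_avoidsT_card_eq_atRank S (insert j F)
  have hjY : j ∈ Y := by
    by_contra hj
    have := le_atRank ((subset_insert_iff_of_notMem hj).1 hYF) hY
    have := hflat j hjF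
    omega
  rw [subset_insert_iff] at hYF
  rw [← insert_erase hjY] at hY hcard
  calc qtRank (fun i => coordSub 𝔽 (S i)) (coordSub 𝔽 (F : Set (Fin n)))
      ≤ atRank S F := qtRank_coordSub_le_atRank S F
    _ < #(insert j (Y.erase j)) := hcard ▸ hflat j hjF
    _ = Module.finrank 𝔽 ↥(coordSub 𝔽 (Y.erase j : Set (Fin n)) ⊔ span 𝔽 {v}) := by
        rw [card_insert_of_notMem (notMem_erase j Y),
          finrank_coordSub_sup_span_singleton (notMem_erase j Y) hvj]
    _ ≤ _ := le_qtRank (sup_le_sup_right (coordSub_mono (coe_subset.2 hYF)) _)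
        (isPartialQT_coordSub_sup_span_singleton S (notMem_erase j Y) hvj hY)

/-- flats of the avoidance transversal matroid map to flats of the
corresponding transversal q-matroid. -/
theorem stmt7 {𝔽 : Type*} [Field 𝔽] [Fintype 𝔽] {n k : ℕ} [DecidableEq (Fin n)]
    (S : Fin k → Set (Fin n)) (F : Finset (Fin n))
    (hflat : ∀ j ∉ F, atRank S F < atRank S (insert j F)) :
    ∀ v : Fin n → 𝔽, v ∉ coordSub 𝔽 (F : Set (Fin n)) →
      qtRank (fun i => coordSub 𝔽 (S i)) (coordSub 𝔽 (F : Set (Fin n)))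
        < qtRank (fun i => coordSub 𝔽 (S i))
            (coordSub 𝔽 (F : Set (Fin n)) ⊔ span 𝔽 {v}) :=
  stmt7_general S F hflat
end

section
/- Every nested matroid is an avoidance transversal matroid. Concretely: if M is a matroid on [n] whose lattice of cyclic flats is a chain Z_0 ⊊ Z_1 ⊊ ⋯ ⊊ Z_m with ranks r_0 < r_1 < ⋯ < r_m, then M is transversal, with a presentation obtainable from the chain of cyclic flats. -/
open Submodule

/-!
A set is independent iff it meets every cyclic flat `Z` in at most `r Z` elements: a circuit
inside a dependent set spans a cyclic flat of the same rank, which it then overfills. When the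
cyclic flats form a chain, the union `A t` of those of rank at most `t` is itself a cyclic flat
of rank at most `t`, so independence of `X` says exactly that `X` has at most `t` elements in
each `A t`. For the increasing family `A 0 ⊆ A 1 ⊆ ⋯` this is Hall's condition for an injection
`f` with `x ∉ A (f x)`, i.e. for an avoidance transversal.
-/

theorem IsChain.exists_forall_le_of_finite {β : Type*} [PartialOrder β] {S : Set β}
    (hS : IsChain (· ≤ ·) S) (hfin : S.Finite) (hne : S.Nonempty) :
    ∃ Z ∈ S, ∀ Y ∈ S, Y ≤ Z := by
  obtain ⟨Z, hZ⟩ := hfin.exists_maximal hne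
  exact ⟨Z, hZ.prop, fun Y hY => (hS.total hY hZ.prop).elim id (hZ.le_of_ge hY)⟩

section Avoidance

variable {α : Type*} {k : ℕ} {A : Fin k → Set α}

theorem AvoidsT.card_le_of_subset (hA : Monotone A) {X Y : Finset α} (h : AvoidsT A X)
    (hYX : Y ⊆ X) {t : Fin k} (hY : ↑Y ⊆ A t) : Y.card ≤ t := by
  classical
  obtain ⟨f, hf, hfA⟩ := h
  have hmaps : ∀ x ∈ Y.subtype (· ∈ X), f x ∈ Finset.Iio t := fun x hx => by
    rw [Finset.mem_Iio]
    by_contra! hle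
    exact hfA x (hA hle (hY (Finset.mem_subtype.mp hx)))
  calc Y.card = (Y.subtype (· ∈ X)).card := by
        rw [Finset.card_subtype, Finset.filter_true_of_mem hYX]
    _ ≤ (Finset.Iio t).card := Finset.card_le_card_of_injOn f hmaps hf.injOn
    _ = t := Fin.card_Iio t

theorem avoidsT_of_forall_card_le {X : Finset α} (hX : X.card ≤ k)
    (h : ∀ (t : Fin k) (Y : Finset α), Y ⊆ X → ↑Y ⊆ A t → Y.card ≤ t) : AvoidsT A X := by
  classical
  let T : X → Finset (Fin k) := fun x => {i | (x : α) ∉ A i}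
  suffices hall : ∀ s : Finset X, s.card ≤ (s.biUnion T).card by
    obtain ⟨f, hf, hfT⟩ := (Finset.all_card_le_biUnion_card_iff_exists_injective T).mp hall
    exact ⟨f, hf, fun x => by simpa [T] using hfT x⟩
  intro s
  set U := s.biUnion T
  by_cases hU : Uᶜ.Nonempty
  · -- every element of `s` lies in `A i₀`, where `i₀` is the least index outside `U`
    set i₀ := Uᶜ.min' hU
    have hlow : Finset.Iio i₀ ⊆ U := fun i hi => by
      by_contra hiU
      exact (Finset.mem_Iio.mp hi).not_ge (Finset.min'_le _ i (Finset.mem_compl.mpr hiU))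
    have hs : ↑(s.map (Function.Embedding.subtype _)) ⊆ A i₀ := by
      intro x hx
      obtain ⟨y, hy, rfl⟩ := Finset.mem_map.mp hx
      by_contra hyA
      exact Finset.mem_compl.mp (Uᶜ.min'_mem hU)
        (Finset.mem_biUnion.mpr ⟨y, hy, by simpa [T] using hyA⟩)
    have hsX : s.map (Function.Embedding.subtype _) ⊆ X := fun x hx => by
      obtain ⟨y, -, rfl⟩ := Finset.mem_map.mp hx
      exact y.2
    calc s.card = (s.map (Function.Embedding.subtype _)).card := (Finset.card_map _).symm
      _ ≤ i₀ := h i₀ _ hsX hs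
      _ = (Finset.Iio i₀).card := (Fin.card_Iio i₀).symm
      _ ≤ U.card := Finset.card_le_card hlow
  · rw [Finset.not_nonempty_iff_eq_empty, Finset.compl_eq_empty_iff] at hU
    calc s.card ≤ Fintype.card X := s.card_le_univ
      _ ≤ k := by simpa using hX
      _ = U.card := by simp [hU]

end Avoidance

structure IsMatroidRank {α : Type*} [DecidableEq α] (r : Finset α → ℕ) : Prop where
  le_card : ∀ X, r X ≤ X.card
  mono : ∀ X Y, X ⊆ Y → r X ≤ r Y
  submod : ∀ X Y, r (X ∪ Y) + r (X ∩ Y) ≤ r X + r Y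

namespace IsMatroidRank

variable {α : Type*} [DecidableEq α]

def IsCircuit (r : Finset α → ℕ) (C : Finset α) : Prop :=
  r C < C.card ∧ ∀ x ∈ C, r (C.erase x) = (C.erase x).card

def IsCyclicFlat (r : Finset α → ℕ) (Z : Finset α) : Prop :=
  (∀ j ∉ Z, r Z < r (insert j Z)) ∧ ∀ z ∈ Z, ∃ C ⊆ Z, z ∈ C ∧ IsCircuit r C

def closure [Fintype α] (r : Finset α → ℕ) (X : Finset α) : Finset α :=
  {j | r (insert j X) = r X}

variable {r : Finset α → ℕ}

theorem indep_of_subset (hr : IsMatroidRank r) {X Y : Finset α} (hXY : X ⊆ Y)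
    (hY : r Y = Y.card) : r X = X.card := by
  have h := hr.submod X (Y \ X)
  rw [Finset.union_sdiff_of_subset hXY, Finset.inter_sdiff_self] at h
  have := hr.le_card (Y \ X)
  have := hr.le_card X
  have := Finset.card_sdiff_add_card_eq_card hXY
  omega

theorem rank_union_eq_of_forall_rank_insert_eq (hr : IsMatroidRank r) {X S : Finset α}
    (h : ∀ s ∈ S, r (insert s X) = r X) : r (X ∪ S) = r X := by
  induction S using Finset.induction_on with
  | empty => simp
  | insert a S _ ih =>
    have ihS := ih fun s hs => h s (Finset.mem_insert_of_mem hs)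
    have hsub := hr.submod (X ∪ S) (insert a X)
    rw [show X ∪ S ∪ insert a X = X ∪ insert a S by grind, ihS,
      h a (Finset.mem_insert_self a S)] at hsub
    have := hr.mono X ((X ∪ S) ∩ insert a X) (by grind)
    have := hr.mono X (X ∪ insert a S) Finset.subset_union_left
    omega

section Closure

variable [Fintype α]

theorem subset_closure (X : Finset α) : X ⊆ closure r X := fun j hj => by
  simp [closure, Finset.insert_eq_self.mpr hj]

theorem rank_closure (hr : IsMatroidRank r) (X : Finset α) : r (closure r X) = r X := by
  have h := hr.rank_union_eq_of_forall_rank_insert_eq (S := closure r X) fun s hs => by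
    simpa [closure] using hs
  rwa [Finset.union_eq_right.mpr (subset_closure X)] at h

theorem rank_closure_lt_rank_insert (hr : IsMatroidRank r) {X : Finset α} {j : α}
    (hj : j ∉ closure r X) : r (closure r X) < r (insert j (closure r X)) := by
  have hne : r (insert j X) ≠ r X := by simpa [closure] using hj
  have := hr.mono _ _ (Finset.subset_insert j X)
  have := hr.mono _ _ (Finset.insert_subset_insert j (subset_closure (r := r) X))
  rw [hr.rank_closure]
  omega

end Closure

theorem exists_isCircuit_subset (hr : IsMatroidRank r) {X : Finset α} (hX : r X < X.card) :
    ∃ C ⊆ X, IsCircuit r C := by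
  induction X using Finset.strongInduction with
  | _ X ih =>
    by_cases h : ∀ x ∈ X, r (X.erase x) = (X.erase x).card
    · exact ⟨X, subset_rfl, hX, h⟩
    · push Not at h
      obtain ⟨x, hx, hxe⟩ := h
      obtain ⟨C, hC, hCcirc⟩ :=
        ih _ (Finset.erase_ssubset hx) (lt_of_le_of_ne (hr.le_card _) hxe)
      exact ⟨C, hC.trans (Finset.erase_subset x X), hCcirc⟩

theorem exists_isCircuit_mem_of_indep (hr : IsMatroidRank r) {B : Finset α} {z : α}
    (hB : r B = B.card) (hzB : r (insert z B) < (insert z B).card) :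
    ∃ C ⊆ insert z B, z ∈ C ∧ IsCircuit r C := by
  obtain ⟨C, hCzB, hC⟩ := hr.exists_isCircuit_subset hzB
  refine ⟨C, hCzB, by_contra fun hzC => ?_, hC⟩
  have hCB : C ⊆ B := fun x hx => (Finset.mem_insert.mp (hCzB hx)).resolve_left (by grind)
  exact hC.1.ne (hr.indep_of_subset hCB hB)

theorem IsCircuit.isCyclicFlat_closure [Fintype α] (hr : IsMatroidRank r) {C : Finset α}
    (hC : IsCircuit r C) : IsCyclicFlat r (closure r C) := by
  refine ⟨fun j hj => hr.rank_closure_lt_rank_insert hj, fun z hz => ?_⟩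
  by_cases hzC : z ∈ C
  · exact ⟨C, subset_closure C, hzC, hC⟩
  -- `C` minus one element is independent and spans `z`, so its fundamental circuit contains `z`
  obtain ⟨c, hc⟩ := Finset.card_pos.mp (Nat.zero_lt_of_lt hC.1)
  have hzB : z ∉ C.erase c := fun h => hzC (Finset.mem_of_mem_erase h)
  have hdep : r (insert z (C.erase c)) < (insert z (C.erase c)).card := by
    have := hr.mono _ _ (Finset.insert_subset_insert z (Finset.erase_subset c C))
    have hzcl : r (insert z C) = r C := by simpa [closure] using hz
    rw [Finset.card_insert_of_notMem hzB, Finset.card_erase_of_mem hc]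
    have := hC.1
    omega
  obtain ⟨C', hC'B, hzC', hC'⟩ := hr.exists_isCircuit_mem_of_indep (hC.2 c hc) hdep
  refine ⟨C', fun x hx => ?_, hzC', hC'⟩
  rcases Finset.mem_insert.mp (hC'B hx) with rfl | hxB
  · exact hz
  · exact subset_closure C (Finset.mem_of_mem_erase hxB)

theorem indep_iff_forall_isCyclicFlat [Fintype α] (hr : IsMatroidRank r) (X : Finset α) :
    r X = X.card ↔ ∀ Z, IsCyclicFlat r Z → (X ∩ Z).card ≤ r Z := by
  refine ⟨fun hX Z _ => ?_, fun h => ?_⟩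
  · rw [← hr.indep_of_subset Finset.inter_subset_left hX]
    exact hr.mono _ _ Finset.inter_subset_right
  -- a circuit `C ⊆ X` has more elements than the rank of the cyclic flat it spans
  by_contra hX
  obtain ⟨C, hCX, hC⟩ := hr.exists_isCircuit_subset (lt_of_le_of_ne (hr.le_card X) hX)
  have hle := h _ (hC.isCyclicFlat_closure hr)
  rw [hr.rank_closure] at hle
  have := Finset.card_le_card (Finset.subset_inter hCX (subset_closure (r := r) C))
  exact absurd hC.1 (by omega)

def cyclicFlatUnion (r : Finset α → ℕ) (t : ℕ) : Set α :=
  {x | ∃ Z, IsCyclicFlat r Z ∧ r Z ≤ t ∧ x ∈ Z}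

theorem forall_card_inter_le_iff_of_isChain [Fintype α]
    (hnested : IsChain (· ⊆ ·) {Z | IsCyclicFlat r Z}) (X : Finset α) :
    (∀ Z, IsCyclicFlat r Z → (X ∩ Z).card ≤ r Z) ↔
      ∀ (t : Fin (Fintype.card α)) (Y : Finset α), Y ⊆ X → ↑Y ⊆ cyclicFlatUnion r t →
        Y.card ≤ t := by
  refine ⟨fun h t Y hYX hY => ?_, fun h Z hZ => ?_⟩
  · rcases Y.eq_empty_or_nonempty with rfl | ⟨y, hy⟩
    · simp
    -- the cyclic flats of rank at most `t` form a chain, so `Y` lies in the largest of them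
    obtain ⟨Z₀, hZ₀, hZ₀t, -⟩ := hY hy
    have hchain : IsChain (· ≤ ·) {Z | IsCyclicFlat r Z ∧ r Z ≤ t} :=
      hnested.mono fun _ hZ => hZ.1
    obtain ⟨Z, ⟨hZ, hZt⟩, hZmax⟩ :=
      hchain.exists_forall_le_of_finite (Set.toFinite _) ⟨Z₀, hZ₀, hZ₀t⟩
    have hYZ : Y ⊆ X ∩ Z := fun x hx => by
      obtain ⟨Z', hZ', hZ't, hxZ'⟩ := hY hx
      exact Finset.mem_inter.mpr ⟨hYX hx, hZmax Z' ⟨hZ', hZ't⟩ hxZ'⟩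
    exact (Finset.card_le_card hYZ).trans ((h Z hZ).trans hZt)
  · by_cases hZk : r Z < Fintype.card α
    · exact h ⟨r Z, hZk⟩ (X ∩ Z) Finset.inter_subset_left
        fun x hx => ⟨Z, hZ, le_rfl, (Finset.mem_inter.mp hx).2⟩
    · calc (X ∩ Z).card ≤ Fintype.card α := Finset.card_le_univ _
        _ ≤ r Z := not_lt.mp hZk

end IsMatroidRank

theorem stmt17_general {n : ℕ} (r : Finset (Fin n) → ℕ)
    (hrcard : ∀ X, r X ≤ X.card)
    (hrmono : ∀ X Y, X ⊆ Y → r X ≤ r Y)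
    (hrsub : ∀ X Y, r (X ∪ Y) + r (X ∩ Y) ≤ r X + r Y)
    (hnested : IsChain (· ⊆ ·)
      {Z : Finset (Fin n) |
        (∀ j ∉ Z, r Z < r (insert j Z)) ∧
        ∀ z ∈ Z, ∃ C ⊆ Z, z ∈ C ∧ r C < C.card ∧
          ∀ x ∈ C, r (C.erase x) = (C.erase x).card}) :
    ∃ (k : ℕ) (A : Fin k → Set (Fin n)),
      ∀ X : Finset (Fin n), r X = X.card ↔ AvoidsT A X := by
  have hr : IsMatroidRank r := ⟨hrcard, hrmono, hrsub⟩
  have hA : Monotone fun t : Fin (Fintype.card (Fin n)) => IsMatroidRank.cyclicFlatUnion r t :=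
    fun _ _ hst _ ⟨Z, hZ, hZs, hxZ⟩ => ⟨Z, hZ, hZs.trans hst, hxZ⟩
  refine ⟨Fintype.card (Fin n), fun t => IsMatroidRank.cyclicFlatUnion r t, fun X => ?_⟩
  rw [hr.indep_iff_forall_isCyclicFlat, IsMatroidRank.forall_card_inter_le_iff_of_isChain hnested]
  exact ⟨avoidsT_of_forall_card_le X.card_le_univ,
    fun hX t Y hYX hY => hX.card_le_of_subset hA hYX hY⟩

/-- every nested matroid (a matroid whose cyclic flats form a chain)
is an avoidance transversal matroid: there is a family of subsets such that the
independent sets are precisely the sets admitting an avoidance transversal of it. -/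
theorem stmt17 {n : ℕ} (r : Finset (Fin n) → ℕ)
    (hr0 : r ∅ = 0)
    (hrcard : ∀ X, r X ≤ X.card)
    (hrmono : ∀ X Y, X ⊆ Y → r X ≤ r Y)
    (hrsub : ∀ X Y, r (X ∪ Y) + r (X ∩ Y) ≤ r X + r Y)
    (hnested : IsChain (· ⊆ ·)
      {Z : Finset (Fin n) |
        (∀ j ∉ Z, r Z < r (insert j Z)) ∧
        ∀ z ∈ Z, ∃ C ⊆ Z, z ∈ C ∧ r C < C.card ∧
          ∀ x ∈ C, r (C.erase x) = (C.erase x).card}) :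
    ∃ (k : ℕ) (A : Fin k → Set (Fin n)),
      ∀ X : Finset (Fin n), r X = X.card ↔ AvoidsT A X :=
  stmt17_general r hrcard hrmono hrsub hnested
end
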